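/- Let A ≥ B ≥ 1 be integers, a and b nonzero real numbers, and y_1,…,y_A, z_1,…,z_B real numbers. In ℝ[X] set P(X) = a·Π_{i=1}^{A}(X − y_i) and D(X) = b·Π_{i=1}^{B}(X − z_i), let C = A − B, and let Q be the quotient in the division P = D·Q + R with deg R < B. Then for every 0 ≤ i ≤ C, the coefficient of X^i in Q equals (a/b)·(−1)^{C−i}·Σ_{v=0}^{C−i} (−1)^v e_{C−i−v}(y_1,…,y_A) h_v(z_1,…,z_B), where e_r and h_r denote respectively the r-th elementary symmetric polynomial and the r-th complete homogeneous symmetric polynomial in the indicated variables. -/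

import Mathlib

open Polynomial

/-- `r`-th elementary symmetric polynomial in the values `x 1, …, x N`. -/
noncomputable def esym (N r : ℕ) (x : ℕ → ℝ) : ℝ :=
  ∑ s ∈ Finset.powersetCard r (Finset.Icc 1 N), ∏ i ∈ s, x i

/-- `r`-th complete homogeneous symmetric polynomial in the values `x 1, …, x N`:
the sum over weakly increasing tuples `1 ≤ i_1 ≤ ⋯ ≤ i_r ≤ N` of `x i_1 ⋯ x i_r`. -/
noncomputable def hsym (N r : ℕ) (x : ℕ → ℝ) : ℝ :=
  ∑ f ∈ Finset.univ.filter (fun f : Fin r → Fin N => ∀ i j : Fin r, i ≤ j → f i ≤ f j),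
    ∏ i : Fin r, x ((f i : ℕ) + 1)

/-!
Reversing the division `P = D Q + R` (substituting `X ↦ 1/X` and clearing denominators) gives
`X^A P(1/X) ≡ X^B D(1/X) · X^C Q(1/X) mod X^(C+1)`, because `deg R < B`. In the ring of power
series `X^B D(1/X) = b ∏ (1 - z_i X)` is invertible with inverse `b⁻¹ ∑ h_v(z) X^v`, and
`X^A P(1/X) = a ∑ (-1)^m e_m(y) X^m`; so the coefficients of the reversed quotient are the
coefficients of a Cauchy product of these two series.
-/

open Finset

lemma Polynomial.natDegree_eq_of_eq_mul_add {R : Type*} [Ring R] {f g q r : R[X]}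
    (hg : g.Monic) (h : f = g * q + r) (hr : r.degree < g.degree) :
    q.natDegree = f.natDegree - g.natDegree := by
  rw [← (div_modByMonic_unique q r hg ⟨(add_comm _ _).trans h.symm, hr⟩).1,
    natDegree_divByMonic _ hg]

lemma Polynomial.coeff_reflect_eq_of_eq_mul_add {R : Type*} [Semiring R] {f g q r : R[X]}
    {M N : ℕ} (hg : g.natDegree ≤ M) (hq : q.natDegree ≤ N) (h : f = g * q + r)
    (hr : r.degree < M) {m : ℕ} (hm : m ≤ N) :
    (reflect (M + N) f).coeff m = (reflect M g * reflect N q).coeff m := by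
  have hrm : r.coeff (M + N - m) = 0 :=
    coeff_eq_zero_of_degree_lt (hr.trans_le (by exact_mod_cast (by omega : M ≤ M + N - m)))
  rw [h, reflect_add, reflect_mul _ _ hg hq, coeff_add, coeff_reflect _ r,
    revAt_le (by omega), hrm, add_zero]

lemma PowerSeries.coeff_eq_coeff_mul_of_mul_eq_one {R : Type*} [CommSemiring R]
    {e h q f : PowerSeries R} (heh : e * h = 1) {n : ℕ}
    (hq : ∀ m ≤ n, coeff m (e * q) = coeff m f) {s : ℕ} (hs : s ≤ n) :
    coeff s q = coeff s (h * f) := by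
  calc coeff s q = coeff s (h * (e * q)) := by rw [← mul_assoc, mul_comm h, heh, one_mul]
    _ = coeff s (h * f) := by
      rw [coeff_mul, coeff_mul]
      refine sum_congr rfl fun p hp => ?_
      rw [hq p.2 (by have := mem_antidiagonal.1 hp; omega)]

lemma sum_antidiagonal_mul_neg_one_pow_mul {R : Type*} [CommRing R] (e h : ℕ → R) (s : ℕ) :
    ∑ p ∈ antidiagonal s, h p.1 * ((-1) ^ p.2 * e p.2) =
      (-1) ^ s * ∑ v ∈ range (s + 1), (-1) ^ v * e (s - v) * h v := by
  rw [Nat.sum_antidiagonal_eq_sum_range_succ (fun v m => h v * ((-1) ^ m * e m)), mul_sum]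
  refine sum_congr rfl fun v hv => ?_
  obtain ⟨w, rfl⟩ := Nat.exists_eq_add_of_le (Nat.lt_succ_iff.1 (mem_range.1 hv))
  have hsq : ((-1 : R) ^ v) * (-1) ^ v = 1 := by rw [← mul_pow, neg_one_mul, neg_neg, one_pow]
  rw [Nat.add_sub_cancel_left]
  linear_combination -(h v * e w * (-1) ^ w) * hsq

section CompleteHomogeneous

variable (x : ℕ → ℝ)

lemma hsym_zero (N : ℕ) : hsym N 0 x = 1 := by
  simp [hsym]

lemma hsym_zero_succ (v : ℕ) : hsym 0 (v + 1) x = 0 := by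
  simp [hsym]

lemma hsym_eq_sum_filter_ne_last (N v : ℕ) :
    hsym N (v + 1) x = ∑ f ∈ univ.filter (fun f : Fin (v + 1) → Fin (N + 1) =>
      (∀ i j, i ≤ j → f i ≤ f j) ∧ f (Fin.last v) ≠ Fin.last N), ∏ i, x ((f i : ℕ) + 1) := by
  refine sum_nbij (fun g => Fin.castSucc ∘ g) ?_ ?_ ?_ ?_
  · intro g hg
    simp only [mem_filter, mem_univ, true_and] at hg ⊢
    exact ⟨fun i j hij => hg i j hij, (Fin.castSucc_lt_last _).ne⟩
  · intro g _ g' _ h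
    funext k
    exact Fin.castSucc_injective _ (congrFun h k)
  · intro f hf
    simp only [coe_filter, mem_univ, true_and, Set.mem_ofPred_eq] at hf
    obtain ⟨hmono, hlast⟩ := hf
    have htop : ∀ k, f k ≠ Fin.last N := fun k hk =>
      hlast (le_antisymm (Fin.le_last _) (hk ▸ hmono _ _ (Fin.le_last k)))
    refine ⟨fun k => (f k).castPred (htop k), ?_, ?_⟩
    · simpa using fun i j hij => hmono i j hij
    · funext k
      simp
  · intro g _
    simp

lemma mul_hsym_eq_sum_filter_eq_last (N v : ℕ) :
    x (N + 1) * hsym (N + 1) v x = ∑ f ∈ univ.filter (fun f : Fin (v + 1) → Fin (N + 1) =>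
      (∀ i j, i ≤ j → f i ≤ f j) ∧ f (Fin.last v) = Fin.last N), ∏ i, x ((f i : ℕ) + 1) := by
  rw [hsym, mul_sum]
  refine sum_nbij' (fun g => Fin.snoc g (Fin.last N)) Fin.init ?_ ?_ ?_ ?_ ?_
  · intro g hg
    simp only [mem_filter, mem_univ, true_and] at hg ⊢
    refine ⟨fun i j hij => ?_, Fin.snoc_last _ _⟩
    obtain ⟨k, rfl⟩ | rfl := j.eq_castSucc_or_eq_last
    · obtain ⟨l, rfl⟩ | rfl := i.eq_castSucc_or_eq_last
      · simpa using hg l k (by simpa using hij)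
      · exact absurd hij (Fin.castSucc_lt_last k).not_ge
    · simpa using Fin.le_last _
  · intro f hf
    simp only [mem_filter, mem_univ, true_and] at hf ⊢
    exact fun i j hij => hf.1 _ _ (Fin.castSucc_le_castSucc_iff.2 hij)
  · intro g _
    exact Fin.init_snoc _ _
  · intro f hf
    simp only [mem_filter, mem_univ, true_and] at hf
    rw [← hf.2, Fin.snoc_init_self]
  · intro g _
    rw [Fin.prod_univ_castSucc, Fin.snoc_last, mul_comm]
    simp

lemma hsym_succ_succ (N v : ℕ) :
    hsym (N + 1) (v + 1) x = hsym N (v + 1) x + x (N + 1) * hsym (N + 1) v x := by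
  rw [hsym, ← sum_filter_not_add_sum_filter _ (fun f => f (Fin.last v) = Fin.last N),
    filter_filter, filter_filter, hsym_eq_sum_filter_ne_last, mul_hsym_eq_sum_filter_eq_last]

end CompleteHomogeneous

noncomputable def prodXSubC (N : ℕ) (x : ℕ → ℝ) : ℝ[X] := ∏ i ∈ Icc 1 N, (X - C (x i))

noncomputable def hsymSeries (N : ℕ) (x : ℕ → ℝ) : PowerSeries ℝ :=
  PowerSeries.mk fun v => hsym N v x

section GeneratingFunctions

variable (x : ℕ → ℝ)

lemma monic_prodXSubC (N : ℕ) : (prodXSubC N x).Monic :=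
  monic_prod_of_monic _ _ fun i _ => monic_X_sub_C (x i)

lemma natDegree_prodXSubC (N : ℕ) : (prodXSubC N x).natDegree = N := by
  simp [prodXSubC, natDegree_prod _ _ fun i _ => X_sub_C_ne_zero (x i)]

lemma coeff_reflect_prodXSubC {N m : ℕ} (hm : m ≤ N) :
    (reflect N (prodXSubC N x)).coeff m = (-1) ^ m * esym N m x := by
  have hprod : prodXSubC N x = (((Icc 1 N).val.map x).map fun t => X - C t).prod := by
    rw [Multiset.map_map]
    rfl
  have hcard : Multiset.card ((Icc 1 N).val.map x) = N := by simp
  rw [coeff_reflect, revAt_le hm, hprod, Multiset.prod_X_sub_C_coeff _ (by omega), hcard,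
    Nat.sub_sub_self hm, Finset.esymm_map_val]
  rfl

lemma reflect_prodXSubC_succ (N : ℕ) :
    reflect (N + 1) (prodXSubC (N + 1) x) =
      reflect N (prodXSubC N x) * (1 - C (x (N + 1)) * X) := by
  have hlin : reflect 1 (X - C (x (N + 1))) = 1 - C (x (N + 1)) * X := by
    simp [reflect_sub, reflect_C]
  rw [prodXSubC, prod_Icc_succ_top (by omega), ← prodXSubC,
    reflect_mul _ _ (natDegree_prodXSubC x N).le (natDegree_X_sub_C_le _), hlin]

lemma hsymSeries_zero : hsymSeries 0 x = 1 := by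
  ext (_ | v) <;> simp [hsymSeries, hsym_zero, hsym_zero_succ]

lemma hsymSeries_succ_mul (N : ℕ) :
    hsymSeries (N + 1) x * ((1 - C (x (N + 1)) * X : ℝ[X]) : PowerSeries ℝ) =
      hsymSeries N x := by
  push_cast
  ext (_ | v)
  · simp [hsymSeries, hsym_zero]
  · simp [hsymSeries, mul_sub, ← mul_assoc, mul_comm _ (PowerSeries.C _),
      PowerSeries.coeff_succ_mul_X, hsym_succ_succ]

lemma reflect_prodXSubC_mul_hsymSeries (N : ℕ) :
    (reflect N (prodXSubC N x) : PowerSeries ℝ) * hsymSeries N x = 1 := by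
  induction N with
  | zero => simp [prodXSubC, hsymSeries_zero]
  | succ N ih =>
    rw [reflect_prodXSubC_succ, Polynomial.coe_mul, mul_assoc, mul_comm _ (hsymSeries _ x),
      hsymSeries_succ_mul, ih]

lemma coeff_hsymSeries_mul_reflect_prodXSubC (w : ℕ → ℝ) {M N s : ℕ} (hs : s ≤ M) :
    PowerSeries.coeff s (hsymSeries N w * (reflect M (prodXSubC M x) : PowerSeries ℝ)) =
      (-1) ^ s * ∑ v ∈ range (s + 1), (-1) ^ v * esym M (s - v) x * hsym N v w := by
  rw [PowerSeries.coeff_mul,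
    ← sum_antidiagonal_mul_neg_one_pow_mul (fun m => esym M m x) (fun v => hsym N v w)]
  refine sum_congr rfl fun p hp => ?_
  have := mem_antidiagonal.1 hp
  rw [hsymSeries, PowerSeries.coeff_mk, coeff_coe, coeff_reflect_prodXSubC x (by omega)]

end GeneratingFunctions

theorem stmt_8 (A B : ℕ) (hAB : B ≤ A) (a b : ℝ) (hb : b ≠ 0)
    (y z : ℕ → ℝ) (Q Rem : Polynomial ℝ)
    (hdiv : Polynomial.C a * ∏ i ∈ Finset.Icc 1 A, (X - Polynomial.C (y i))
      = (Polynomial.C b * ∏ i ∈ Finset.Icc 1 B, (X - Polynomial.C (z i))) * Q + Rem)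
    (hRem : Rem.degree < (B : WithBot ℕ)) :
    ∀ i ≤ A - B,
      Q.coeff i = (a / b) * (-1 : ℝ) ^ (A - B - i) *
        ∑ v ∈ Finset.range (A - B - i + 1),
          (-1 : ℝ) ^ v * esym A (A - B - i - v) y * hsym B v z := by
  intro i hi
  have hdiv' : C a * prodXSubC A y = prodXSubC B z * (C b * Q) + Rem := by
    rw [prodXSubC, prodXSubC, hdiv]
    ring
  have hdegD : (prodXSubC B z).degree = B := by
    rw [degree_eq_natDegree (monic_prodXSubC z B).ne_zero, natDegree_prodXSubC]
  have hdegQ : (C b * Q).natDegree ≤ A - B := by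
    rw [natDegree_eq_of_eq_mul_add (monic_prodXSubC z B) hdiv' (hdegD ▸ hRem),
      natDegree_prodXSubC]
    exact Nat.sub_le_sub_right ((natDegree_C_mul_le _ _).trans (natDegree_prodXSubC y A).le) B
  have hlow : ∀ m ≤ A - B, PowerSeries.coeff m ((reflect B (prodXSubC B z) : PowerSeries ℝ) *
      (reflect (A - B) (C b * Q) : PowerSeries ℝ)) =
        PowerSeries.coeff m (reflect A (C a * prodXSubC A y) : PowerSeries ℝ) := fun m hm => by
    have h := coeff_reflect_eq_of_eq_mul_add (natDegree_prodXSubC z B).le hdegQ hdiv' hRem hm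
    rw [Nat.add_sub_cancel' hAB] at h
    rw [← Polynomial.coe_mul, coeff_coe, coeff_coe, h]
  have key := PowerSeries.coeff_eq_coeff_mul_of_mul_eq_one
    (reflect_prodXSubC_mul_hsymSeries z B) hlow (Nat.sub_le (A - B) i)
  rw [coeff_coe, reflect_C_mul, coeff_C_mul, coeff_reflect, revAt_le (Nat.sub_le _ _),
    Nat.sub_sub_self hi, reflect_C_mul, Polynomial.coe_mul, Polynomial.coe_C, mul_left_comm,
    PowerSeries.coeff_C_mul, coeff_hsymSeries_mul_reflect_prodXSubC y z (by omega)] at key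
  field_simp
  linear_combination key
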